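/- For the two-phase test, the type-II error probability satisfies limsup_{n→∞} (1/n) log P₂(A₁^τ) ≤ −min{ D(P^(λ₂)‖P₂), γ + k·D(P^(λ)‖P₂) }. -/

import Mathlib

open Real Filter Finset MeasureTheory
open scoped Classical

variable {𝒳 : Type*} [Fintype 𝒳] [DecidableEq 𝒳] [Nonempty 𝒳]

/-- Kullback–Leibler divergence `D(Q‖P)` between pmfs on a finite alphabet. -/
noncomputable def kl (Q P : 𝒳 → ℝ) : ℝ :=
  ∑ x, Q x * Real.log (Q x / P x)

/-- The `λ`-tilted distribution `P^(λ)` of `P₁` and `P₂`. -/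
noncomputable def tilt (P₁ P₂ : 𝒳 → ℝ) (l : ℝ) : 𝒳 → ℝ :=
  fun x => P₁ x ^ (1 - l) * P₂ x ^ l / ∑ a, P₁ a ^ (1 - l) * P₂ a ^ l

/-- Probability of a set of length-`N` sample paths under i.i.d. sampling from `P`. -/
noncomputable def prodProb (P : 𝒳 → ℝ) {N : ℕ} (S : Set (Fin N → 𝒳)) : ℝ :=
  ∑ ω : Fin N → 𝒳, S.indicator (fun ω' => ∏ i, P (ω' i)) ω

/-- The fixed-length error-exponent region `R_FD`. -/
def RFD (P₁ P₂ : 𝒳 → ℝ) : Set (ℝ × ℝ) :=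
  {p | 0 ≤ p.1 ∧ 0 ≤ p.2 ∧
    ∃ l ∈ Set.Icc (0:ℝ) 1,
      p.1 ≤ kl (tilt P₁ P₂ l) P₁ ∧ p.2 ≤ kl (tilt P₁ P₂ l) P₂}

/-- `E₁(γ) = max{D(P^(λ)‖P₁) : λ ∈ [0,1], D(P^(λ)‖P₂) ≥ γ}` (sup of the empty set is 0). -/
noncomputable def E1exp (P₁ P₂ : 𝒳 → ℝ) (γ : ℝ) : ℝ :=
  sSup {E | ∃ l ∈ Set.Icc (0:ℝ) 1, γ ≤ kl (tilt P₁ P₂ l) P₂ ∧ E = kl (tilt P₁ P₂ l) P₁}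

/-- `E₂(γ) = max{D(P^(λ)‖P₂) : λ ∈ [0,1], D(P^(λ)‖P₁) ≥ γ}` (sup of the empty set is 0). -/
noncomputable def E2exp (P₁ P₂ : 𝒳 → ℝ) (γ : ℝ) : ℝ :=
  sSup {E | ∃ l ∈ Set.Icc (0:ℝ) 1, γ ≤ kl (tilt P₁ P₂ l) P₁ ∧ E = kl (tilt P₁ P₂ l) P₂}

/-- A sequential hypothesis test whose stopping time is bounded by `N`:
a stopping time `τ` for the coordinate filtration, together with decision events
`A1`, `A2` that are determined by the samples observed up to time `τ`,
are disjoint, and exhaust the sample space. -/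
structure HypTest (𝒳 : Type*) (N : ℕ) where
  τ : (Fin N → 𝒳) → ℕ
  A1 : Set (Fin N → 𝒳)
  A2 : Set (Fin N → 𝒳)
  tau_le : ∀ ω, τ ω ≤ N
  stopping : ∀ ω ω', (∀ i : Fin N, (i : ℕ) < τ ω → ω i = ω' i) → τ ω' = τ ω
  adapted1 : ∀ ω ω', (∀ i : Fin N, (i : ℕ) < τ ω → ω i = ω' i) → (ω ∈ A1 ↔ ω' ∈ A1)
  adapted2 : ∀ ω ω', (∀ i : Fin N, (i : ℕ) < τ ω → ω i = ω' i) → (ω ∈ A2 ↔ ω' ∈ A2)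
  disj : Disjoint A1 A2
  exhaust : A1 ∪ A2 = Set.univ

/-- `(E₁, E₂)` is achievable by `γ`-almost-fixed-length tests. -/
def AFLAchievable (P₁ P₂ : 𝒳 → ℝ) (γ E₁ E₂ : ℝ) : Prop :=
  0 ≤ E₁ ∧ 0 ≤ E₂ ∧
  ∃ c : ℝ, 0 < c ∧ ∃ l : ℕ, 0 < l ∧
    ∀ δ : ℝ, 0 < δ → ∃ n₀ : ℕ, ∀ n : ℕ, n₀ ≤ n →
      ∃ N : ℕ, (N : ℝ) ≤ c * (n : ℝ) ^ l ∧
        ∃ T : HypTest 𝒳 N,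
          prodProb P₁ {ω | n < T.τ ω} ≤ Real.exp (-(γ * n)) ∧
          prodProb P₂ {ω | n < T.τ ω} ≤ Real.exp (-(γ * n)) ∧
          prodProb P₁ T.A2 ≤ Real.exp (-((E₁ - δ) * n)) ∧
          prodProb P₂ T.A1 ≤ Real.exp (-((E₂ - δ) * n))

/-- `(E₁, E₂, E_Ω)` is achievable by fixed-length tests with a rejection option. -/
def RejAchievable (P₁ P₂ : 𝒳 → ℝ) (E₁ E₂ EΩ : ℝ) : Prop :=
  0 ≤ E₁ ∧ 0 ≤ E₂ ∧ 0 ≤ EΩ ∧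
  ∀ δ : ℝ, 0 < δ → ∃ n₀ : ℕ, ∀ n : ℕ, n₀ ≤ n →
    ∃ A1 A2 AΩ : Set (Fin n → 𝒳),
      Disjoint A1 A2 ∧ Disjoint A1 AΩ ∧ Disjoint A2 AΩ ∧ A1 ∪ A2 ∪ AΩ = Set.univ ∧
      prodProb P₁ A2 ≤ Real.exp (-((E₁ - δ) * n)) ∧
      prodProb P₂ A1 ≤ Real.exp (-((E₂ - δ) * n)) ∧
      prodProb P₁ AΩ + prodProb P₂ AΩ ≤ Real.exp (-((EΩ - δ) * n))

/-- Sum of the log-likelihood ratios of the first `n` samples. -/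
noncomputable def S1 (P₁ P₂ : 𝒳 → ℝ) (n : ℕ) {N : ℕ} (ω : Fin N → 𝒳) : ℝ :=
  ∑ i ∈ Finset.univ.filter (fun i : Fin N => (i : ℕ) < n),
    Real.log (P₁ (ω i) / P₂ (ω i))

/-- Sum of the log-likelihood ratios of the samples after time `n`. -/
noncomputable def S2 (P₁ P₂ : 𝒳 → ℝ) (n : ℕ) {N : ℕ} (ω : Fin N → 𝒳) : ℝ :=
  ∑ i ∈ Finset.univ.filter (fun i : Fin N => n ≤ (i : ℕ)),
    Real.log (P₁ (ω i) / P₂ (ω i))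

/-- Event that the two-phase test (phase-one thresholds `α₁ > β₁`, phase-two threshold `α`)
chooses `H₁`. -/
def twoPhaseA1 (P₁ P₂ : 𝒳 → ℝ) (k n : ℕ) (α₁ β₁ α : ℝ) : Set (Fin ((k + 1) * n) → 𝒳) :=
  {ω | α₁ ≤ S1 P₁ P₂ n ω / n ∨
    (β₁ < S1 P₁ P₂ n ω / n ∧ S1 P₁ P₂ n ω / n < α₁ ∧ α ≤ S2 P₁ P₂ n ω / (k * n))}

/-- Event that the two-phase test chooses `H₂`. -/
def twoPhaseA2 (P₁ P₂ : 𝒳 → ℝ) (k n : ℕ) (α₁ β₁ α : ℝ) : Set (Fin ((k + 1) * n) → 𝒳) :=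
  {ω | S1 P₁ P₂ n ω / n ≤ β₁ ∨
    (β₁ < S1 P₁ P₂ n ω / n ∧ S1 P₁ P₂ n ω / n < α₁ ∧ S2 P₁ P₂ n ω / (k * n) < α)}

/-- Stopping time of the two-phase test: `n` if phase one is decisive, `(k+1)n` otherwise. -/
noncomputable def twoPhaseTau (P₁ P₂ : 𝒳 → ℝ) (k n : ℕ) (α₁ β₁ : ℝ)
    (ω : Fin ((k + 1) * n) → 𝒳) : ℕ :=
  if β₁ < S1 P₁ P₂ n ω / n ∧ S1 P₁ P₂ n ω / n < α₁ then (k + 1) * n else n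

/-!
Split `A₁` into the phase-one acceptance `{S₁ ≥ n α₁}` and the event "continue, then accept"
`{S₁ > n β₁, S₂ ≥ k n α}`. Under `P₂` each is bounded by an exponential Markov (Chernoff)
inequality whose parameter on a block is `1 - λ` for the tilt defining that block's threshold;
the moment generating function factorises over the samples into powers of
`Z(λ) = ∑ₓ P₁(x)^(1-λ) P₂(x)^λ`. Because
`(1 - λ) D(P^(λ)‖P₁) + λ D(P^(λ)‖P₂) = -log Z(λ)`, the exponent obtained at the threshold
`D(P^(λ)‖P₂) - D(P^(λ)‖P₁)` is exactly `D(P^(λ)‖P₂)`, so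
`P₂(A₁) ≤ exp(-n D(P^(λ₂)‖P₂)) + exp(-n D(P^(λ₁)‖P₂) - k n D(P^(λ)‖P₂))`, and
`D(P^(λ₁)‖P₂) ≥ γ`. The constant sample path at a letter maximising `P₁/P₂` lies in `A₁`, so
`P₂(A₁)` is positive and decays at most exponentially.
-/

section Tilt

variable {α : Type*} [Fintype α] {P₁ P₂ : α → ℝ}

noncomputable def tiltNorm (P₁ P₂ : α → ℝ) (l : ℝ) : ℝ :=
  ∑ a, P₁ a ^ (1 - l) * P₂ a ^ l

lemma tilt_apply (l : ℝ) (x : α) :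
    tilt P₁ P₂ l x = P₁ x ^ (1 - l) * P₂ x ^ l / tiltNorm P₁ P₂ l :=
  rfl

lemma tiltNorm_pos [Nonempty α] (h1 : ∀ x, 0 < P₁ x) (h2 : ∀ x, 0 < P₂ x) (l : ℝ) :
    0 < tiltNorm P₁ P₂ l :=
  Finset.sum_pos (fun a _ => by have := h1 a; have := h2 a; positivity) Finset.univ_nonempty

lemma tiltNorm_one (h2sum : ∑ x, P₂ x = 1) : tiltNorm P₁ P₂ 1 = 1 := by
  simp [tiltNorm, h2sum]

lemma tilt_pos [Nonempty α] (h1 : ∀ x, 0 < P₁ x) (h2 : ∀ x, 0 < P₂ x) (l : ℝ) (x : α) :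
    0 < tilt P₁ P₂ l x := by
  have := h1 x
  have := h2 x
  have := tiltNorm_pos h1 h2 l
  rw [tilt_apply]
  positivity

lemma sum_tilt [Nonempty α] (h1 : ∀ x, 0 < P₁ x) (h2 : ∀ x, 0 < P₂ x) (l : ℝ) :
    ∑ x, tilt P₁ P₂ l x = 1 := by
  simp_rw [tilt_apply, ← Finset.sum_div]
  exact div_self (tiltNorm_pos h1 h2 l).ne'

lemma log_tilt [Nonempty α] (h1 : ∀ x, 0 < P₁ x) (h2 : ∀ x, 0 < P₂ x) (l : ℝ) (x : α) :
    Real.log (tilt P₁ P₂ l x)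
      = (1 - l) * Real.log (P₁ x) + l * Real.log (P₂ x) - Real.log (tiltNorm P₁ P₂ l) := by
  have := h1 x
  have := h2 x
  rw [tilt_apply, Real.log_div (by positivity) (tiltNorm_pos h1 h2 l).ne',
    Real.log_mul (by positivity) (by positivity), Real.log_rpow (h1 x), Real.log_rpow (h2 x)]

lemma kl_sub_kl (Q : α → ℝ) (h1 : ∀ x, 0 < P₁ x) (h2 : ∀ x, 0 < P₂ x) :
    kl Q P₂ - kl Q P₁ = ∑ x, Q x * Real.log (P₁ x / P₂ x) := by
  rw [kl, kl, ← Finset.sum_sub_distrib]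
  refine Finset.sum_congr rfl fun x _ => ?_
  rcases eq_or_ne (Q x) 0 with hQ | hQ
  · simp [hQ]
  · rw [Real.log_div hQ (h2 x).ne', Real.log_div hQ (h1 x).ne',
      Real.log_div (h1 x).ne' (h2 x).ne']
    ring

lemma one_sub_mul_kl_tilt_add_mul_kl_tilt [Nonempty α] (h1 : ∀ x, 0 < P₁ x)
    (h2 : ∀ x, 0 < P₂ x) (l : ℝ) :
    (1 - l) * kl (tilt P₁ P₂ l) P₁ + l * kl (tilt P₁ P₂ l) P₂
      = -Real.log (tiltNorm P₁ P₂ l) := by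
  have hterm : ∀ x, (1 - l) * (tilt P₁ P₂ l x * Real.log (tilt P₁ P₂ l x / P₁ x))
      + l * (tilt P₁ P₂ l x * Real.log (tilt P₁ P₂ l x / P₂ x))
      = tilt P₁ P₂ l x * -Real.log (tiltNorm P₁ P₂ l) := fun x => by
    have htilt := (tilt_pos h1 h2 l x).ne'
    rw [Real.log_div htilt (h1 x).ne', Real.log_div htilt (h2 x).ne', log_tilt h1 h2]
    ring
  rw [kl, kl, Finset.mul_sum, Finset.mul_sum, ← Finset.sum_add_distrib,
    Finset.sum_congr rfl fun x _ => hterm x, ← Finset.sum_mul, sum_tilt h1 h2, one_mul]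

lemma sum_mul_exp_mul_log_div_eq_tiltNorm (h1 : ∀ x, 0 < P₁ x) (h2 : ∀ x, 0 < P₂ x) (l : ℝ) :
    ∑ x, P₂ x * Real.exp ((1 - l) * Real.log (P₁ x / P₂ x)) = tiltNorm P₁ P₂ l := by
  refine Finset.sum_congr rfl fun x _ => ?_
  rw [Real.rpow_def_of_pos (h1 x), Real.rpow_def_of_pos (h2 x), ← Real.exp_add,
    Real.log_div (h1 x).ne' (h2 x).ne']
  nth_rewrite 1 [← Real.exp_log (h2 x)]
  rw [← Real.exp_add]
  ring_nf

lemma exp_neg_mul_mul_tiltNorm_pow [Nonempty α] (h1 : ∀ x, 0 < P₁ x) (h2 : ∀ x, 0 < P₂ x)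
    (l : ℝ) (m : ℕ) :
    Real.exp (-((1 - l) * (m * (kl (tilt P₁ P₂ l) P₂ - kl (tilt P₁ P₂ l) P₁))))
        * tiltNorm P₁ P₂ l ^ m
      = Real.exp (-(m * kl (tilt P₁ P₂ l) P₂)) := by
  rw [← Real.exp_log (tiltNorm_pos h1 h2 l), ← Real.exp_nat_mul, ← Real.exp_add]
  congr 1
  linear_combination (m : ℝ) * one_sub_mul_kl_tilt_add_mul_kl_tilt h1 h2 l

end Tilt

section Sampling

variable {α : Type*} [Fintype α] {P : α → ℝ} {N : ℕ}

lemma prod_le_prodProb (hP : ∀ x, 0 ≤ P x) {S : Set (Fin N → α)} {ω : Fin N → α}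
    (hω : ω ∈ S) : ∏ i, P (ω i) ≤ prodProb P S := by
  rw [prodProb, ← Set.indicator_of_mem hω (fun ω' => ∏ i, P (ω' i))]
  exact Finset.single_le_sum (f := fun ω => S.indicator (fun ω' => ∏ i, P (ω' i)) ω)
    (fun ω _ => Set.indicator_nonneg (fun ω _ => Finset.prod_nonneg fun i _ => hP _) ω)
    (Finset.mem_univ ω)

lemma prodProb_union_le (hP : ∀ x, 0 ≤ P x) (S T : Set (Fin N → α)) :
    prodProb P (S ∪ T) ≤ prodProb P S + prodProb P T := by
  rw [prodProb, prodProb, prodProb, ← Finset.sum_add_distrib]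
  refine Finset.sum_le_sum fun ω _ => ?_
  rw [← Set.indicator_union_add_inter_apply]
  exact le_add_of_nonneg_right (Set.indicator_nonneg
    (fun ω _ => Finset.prod_nonneg fun i _ => hP _) ω)

lemma prodProb_le_exp_neg_mul_sum (hP : ∀ x, 0 ≤ P x) {S : Set (Fin N → α)}
    {F : (Fin N → α) → ℝ} {c : ℝ} (hS : ∀ ω ∈ S, c ≤ F ω) :
    prodProb P S ≤ Real.exp (-c) * ∑ ω, Real.exp (F ω) * ∏ i, P (ω i) := by
  rw [prodProb, Finset.mul_sum]
  refine Finset.sum_le_sum fun ω _ => ?_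
  have hprod : 0 ≤ ∏ i, P (ω i) := Finset.prod_nonneg fun i _ => hP _
  by_cases hω : ω ∈ S
  · rw [Set.indicator_of_mem hω, ← mul_assoc, ← Real.exp_add]
    exact le_mul_of_one_le_left hprod (Real.one_le_exp (by linarith [hS ω hω]))
  · rw [Set.indicator_of_notMem hω]
    positivity

lemma prod_fin_ite_lt {M : Type*} [CommMonoid M] {n : ℕ} (h : n ≤ N) (a b : M) :
    ∏ i : Fin N, (if (i : ℕ) < n then a else b) = a ^ n * b ^ (N - n) := by
  rw [Finset.prod_ite, Finset.prod_const, Finset.prod_const, Fin.card_filter_val_lt,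
    min_eq_right h]
  congr
  have := Finset.card_filter_add_card_filter_not (s := Finset.univ) (fun i : Fin N => (i : ℕ) < n)
  rw [Finset.card_univ, Fintype.card_fin, Fin.card_filter_val_lt, min_eq_right h] at this
  omega

lemma sum_exp_S1_S2_mul_prod (P₁ P₂ : α → ℝ) (θa θb : ℝ) {n : ℕ} (h : n ≤ N) :
    ∑ ω : Fin N → α, Real.exp (θa * S1 P₁ P₂ n ω + θb * S2 P₁ P₂ n ω) * ∏ i, P (ω i)
      = (∑ x, P x * Real.exp (θa * Real.log (P₁ x / P₂ x))) ^ n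
        * (∑ x, P x * Real.exp (θb * Real.log (P₁ x / P₂ x))) ^ (N - n) := by
  set θ : Fin N → ℝ := fun i => if (i : ℕ) < n then θa else θb
  have hexp : ∀ ω : Fin N → α, θa * S1 P₁ P₂ n ω + θb * S2 P₁ P₂ n ω
      = ∑ i, θ i * Real.log (P₁ (ω i) / P₂ (ω i)) := fun ω => by
    simp only [θ, S1, S2, ite_mul, Finset.sum_ite, Finset.mul_sum, not_lt]
  simp_rw [hexp, Real.exp_sum, ← Finset.prod_mul_distrib]
  rw [← Fintype.prod_sum (fun i x => Real.exp (θ i * Real.log (P₁ x / P₂ x)) * P x),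
    ← prod_fin_ite_lt h]
  refine Finset.prod_congr rfl fun i _ => ?_
  simp only [θ]
  split_ifs <;> simp only [mul_comm]

end Sampling

lemma const_mem_twoPhaseA1 {α : Type*} {P₁ P₂ : α → ℝ} {k n : ℕ} (hn : 0 < n) {x₀ : α}
    {t₁ : ℝ} (t₂ t : ℝ) (hx₀ : t₁ ≤ Real.log (P₁ x₀ / P₂ x₀)) :
    (fun _ => x₀) ∈ twoPhaseA1 P₁ P₂ k n t₁ t₂ t := by
  have hS1 : S1 P₁ P₂ n (fun _ : Fin ((k + 1) * n) => x₀) = n * Real.log (P₁ x₀ / P₂ x₀) := by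
    rw [S1, Finset.sum_const, Fin.card_filter_val_lt,
      min_eq_right (Nat.le_mul_of_pos_left n k.succ_pos), nsmul_eq_mul]
  left
  rwa [hS1, mul_div_cancel_left₀ _ (by exact_mod_cast hn.ne')]

section TwoPhase

variable {α : Type*} [Fintype α] {P₁ P₂ : α → ℝ}

lemma prodProb_le_exp_neg_mul_tiltNorm_pow (h1 : ∀ x, 0 < P₁ x) (h2 : ∀ x, 0 < P₂ x) {N n : ℕ}
    (h : n ≤ N) {a b c : ℝ} {S : Set (Fin N → α)}
    (hS : ∀ ω ∈ S, c ≤ (1 - a) * S1 P₁ P₂ n ω + (1 - b) * S2 P₁ P₂ n ω) :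
    prodProb P₂ S ≤ Real.exp (-c) * tiltNorm P₁ P₂ a ^ n * tiltNorm P₁ P₂ b ^ (N - n) := by
  rw [mul_assoc, ← sum_mul_exp_mul_log_div_eq_tiltNorm h1 h2,
    ← sum_mul_exp_mul_log_div_eq_tiltNorm h1 h2, ← sum_exp_S1_S2_mul_prod _ _ _ _ h]
  exact prodProb_le_exp_neg_mul_sum (fun x => (h2 x).le) hS

lemma prodProb_twoPhaseA1_le [Nonempty α] (h1 : ∀ x, 0 < P₁ x) (h2 : ∀ x, 0 < P₂ x)
    (h2sum : ∑ x, P₂ x = 1) {γ l₁ l₂ lam : ℝ} (hl₁ : l₁ ≤ 1) (hl₂ : l₂ ≤ 1) (hlam : lam ≤ 1)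
    (hγ : γ ≤ kl (tilt P₁ P₂ l₁) P₂) {k n : ℕ} (hk : 0 < k) (hn : 0 < n) :
    prodProb P₂ (twoPhaseA1 P₁ P₂ k n
        (kl (tilt P₁ P₂ l₂) P₂ - kl (tilt P₁ P₂ l₂) P₁)
        (kl (tilt P₁ P₂ l₁) P₂ - kl (tilt P₁ P₂ l₁) P₁)
        (kl (tilt P₁ P₂ lam) P₂ - kl (tilt P₁ P₂ lam) P₁))
      ≤ Real.exp (-(n * kl (tilt P₁ P₂ l₂) P₂))
        + Real.exp (-(n * (γ + k * kl (tilt P₁ P₂ lam) P₂))) := by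
  have npos : (0 : ℝ) < n := by exact_mod_cast hn
  have knpos : (0 : ℝ) < (k * n : ℕ) := by exact_mod_cast Nat.mul_pos hk hn
  have hnN : n ≤ (k + 1) * n := Nat.le_mul_of_pos_left n k.succ_pos
  have hN : (k + 1) * n - n = k * n := by rw [add_mul, one_mul, Nat.add_sub_cancel]
  have hphase1 : prodProb P₂ {ω : Fin ((k + 1) * n) → α |
      kl (tilt P₁ P₂ l₂) P₂ - kl (tilt P₁ P₂ l₂) P₁ ≤ S1 P₁ P₂ n ω / n}
      ≤ Real.exp (-(n * kl (tilt P₁ P₂ l₂) P₂)) := by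
    calc _ ≤ Real.exp (-((1 - l₂) * (n * (kl (tilt P₁ P₂ l₂) P₂ - kl (tilt P₁ P₂ l₂) P₁))))
          * tiltNorm P₁ P₂ l₂ ^ n * tiltNorm P₁ P₂ 1 ^ ((k + 1) * n - n) :=
          prodProb_le_exp_neg_mul_tiltNorm_pow h1 h2 hnN fun ω hω => by
            rw [sub_self, zero_mul, add_zero]
            exact mul_le_mul_of_nonneg_left ((le_div_iff₀' npos).1 hω) (by linarith)
      _ = _ := by rw [tiltNorm_one h2sum, one_pow, mul_one, exp_neg_mul_mul_tiltNorm_pow h1 h2]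
  have hphase2 : prodProb P₂ {ω : Fin ((k + 1) * n) → α |
      kl (tilt P₁ P₂ l₁) P₂ - kl (tilt P₁ P₂ l₁) P₁ < S1 P₁ P₂ n ω / n ∧
      S1 P₁ P₂ n ω / n < kl (tilt P₁ P₂ l₂) P₂ - kl (tilt P₁ P₂ l₂) P₁ ∧
      kl (tilt P₁ P₂ lam) P₂ - kl (tilt P₁ P₂ lam) P₁ ≤ S2 P₁ P₂ n ω / (k * n)}
      ≤ Real.exp (-(n * kl (tilt P₁ P₂ l₁) P₂))
        * Real.exp (-((k * n : ℕ) * kl (tilt P₁ P₂ lam) P₂)) := by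
    calc _ ≤ Real.exp (-((1 - l₁) * (n * (kl (tilt P₁ P₂ l₁) P₂ - kl (tilt P₁ P₂ l₁) P₁))
            + (1 - lam) * ((k * n : ℕ) * (kl (tilt P₁ P₂ lam) P₂ - kl (tilt P₁ P₂ lam) P₁))))
          * tiltNorm P₁ P₂ l₁ ^ n * tiltNorm P₁ P₂ lam ^ ((k + 1) * n - n) :=
          prodProb_le_exp_neg_mul_tiltNorm_pow h1 h2 hnN fun ω hω => by
            obtain ⟨hβ, -, hα⟩ := hω
            rw [← Nat.cast_mul] at hα
            exact add_le_add
              (mul_le_mul_of_nonneg_left ((lt_div_iff₀' npos).1 hβ).le (by linarith))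
              (mul_le_mul_of_nonneg_left ((le_div_iff₀' knpos).1 hα) (by linarith))
      _ = _ := by
        rw [hN, neg_add, Real.exp_add, mul_right_comm _ _ (tiltNorm P₁ P₂ l₁ ^ n), mul_assoc,
          exp_neg_mul_mul_tiltNorm_pow h1 h2, exp_neg_mul_mul_tiltNorm_pow h1 h2]
  calc _ ≤ _ := prodProb_union_le (fun x => (h2 x).le) _ _
    _ ≤ _ := add_le_add hphase1 hphase2
    _ ≤ _ := by
      rw [← Real.exp_add]
      gcongr
      push_cast
      linarith [mul_le_mul_of_nonneg_left hγ npos.le]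

lemma exists_const_mem_twoPhaseA1 [Nonempty α] (h1 : ∀ x, 0 < P₁ x) (h2 : ∀ x, 0 < P₂ x)
    (l : ℝ) (k : ℕ) (t₂ t : ℝ) :
    ∃ x₀, ∀ n, 0 < n → (fun _ => x₀) ∈
      twoPhaseA1 P₁ P₂ k n (kl (tilt P₁ P₂ l) P₂ - kl (tilt P₁ P₂ l) P₁) t₂ t := by
  obtain ⟨x₀, -, hmax⟩ := Finset.exists_max_image Finset.univ
    (fun x => Real.log (P₁ x / P₂ x)) Finset.univ_nonempty
  refine ⟨x₀, fun n hn => const_mem_twoPhaseA1 hn t₂ t ?_⟩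
  calc kl (tilt P₁ P₂ l) P₂ - kl (tilt P₁ P₂ l) P₁
      = ∑ x, tilt P₁ P₂ l x * Real.log (P₁ x / P₂ x) := kl_sub_kl _ h1 h2
    _ ≤ ∑ x, tilt P₁ P₂ l x * Real.log (P₁ x₀ / P₂ x₀) :=
        Finset.sum_le_sum fun x hx =>
          mul_le_mul_of_nonneg_left (hmax x hx) (tilt_pos h1 h2 l x).le
    _ = Real.log (P₁ x₀ / P₂ x₀) := by rw [← Finset.sum_mul, sum_tilt h1 h2, one_mul]

end TwoPhase

/-- `hlow` rules out `p n = 0`, where `Real.log` would return the junk value `0`. -/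
lemma limsup_log_div_le_neg_min {p : ℕ → ℝ} {c a b : ℝ} (hc : 0 < c)
    (hlow : ∀ n, 0 < n → c ^ n ≤ p n)
    (hup : ∀ n, 0 < n → p n ≤ Real.exp (-(n * a)) + Real.exp (-(n * b))) :
    limsup (fun n : ℕ => Real.log (p n) / n) atTop ≤ -min a b := by
  have hle : ∀ n, 0 < n → Real.log (p n) / n ≤ Real.log 2 / n + -min a b := fun n hn => by
    have npos : (0 : ℝ) < n := by exact_mod_cast hn
    have hp : p n ≤ 2 * Real.exp (-(n * min a b)) := by
      have ha : Real.exp (-(n * a)) ≤ Real.exp (-(n * min a b)) := by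
        gcongr; exact min_le_left a b
      have hb : Real.exp (-(n * b)) ≤ Real.exp (-(n * min a b)) := by
        gcongr; exact min_le_right a b
      linarith [hup n hn]
    have hlog := Real.log_le_log ((pow_pos hc n).trans_le (hlow n hn)) hp
    rw [Real.log_mul two_ne_zero (Real.exp_ne_zero _), Real.log_exp] at hlog
    rw [div_le_iff₀ npos, add_mul, div_mul_cancel₀ _ npos.ne']
    linarith
  have hge : ∀ n, 0 < n → Real.log c ≤ Real.log (p n) / n := fun n hn => by
    rw [le_div_iff₀ (by exact_mod_cast hn), mul_comm, ← Real.log_pow]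
    exact Real.log_le_log (pow_pos hc n) (hlow n hn)
  have hlim : Tendsto (fun n : ℕ => Real.log 2 / n + -min a b) atTop (nhds (-min a b)) := by
    simpa using (tendsto_const_div_atTop_nhds_zero_nat (Real.log 2)).add_const (-min a b)
  calc limsup (fun n : ℕ => Real.log (p n) / n) atTop
      ≤ limsup (fun n : ℕ => Real.log 2 / n + -min a b) atTop :=
        limsup_le_limsup (eventually_atTop.2 ⟨1, hle⟩)
          (isCoboundedUnder_le_of_eventually_le _ (eventually_atTop.2 ⟨1, hge⟩))
          hlim.isBoundedUnder_le
    _ = -min a b := hlim.limsup_eq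

theorem twoPhase_typeII_exponent_general (P₁ P₂ : 𝒳 → ℝ)
    (h1pos : ∀ x, 0 < P₁ x) (h2pos : ∀ x, 0 < P₂ x)
    (h2sum : ∑ x, P₂ x = 1)
    (γ : ℝ)
    (k : ℕ) (hk : 0 < k)
    (l₁ l₂ lam : ℝ)
    (hl₁ : l₁ ∈ Set.Icc (0:ℝ) 1) (hl₂ : l₂ ∈ Set.Icc (0:ℝ) 1)
    (hlam : lam ∈ Set.Icc (0:ℝ) 1)
    (hmin : min (kl (tilt P₁ P₂ l₁) P₂) (kl (tilt P₁ P₂ l₂) P₁) = γ) :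
    Filter.limsup (fun n : ℕ =>
        Real.log (prodProb P₂ (twoPhaseA1 P₁ P₂ k n
          (kl (tilt P₁ P₂ l₂) P₂ - kl (tilt P₁ P₂ l₂) P₁)
          (kl (tilt P₁ P₂ l₁) P₂ - kl (tilt P₁ P₂ l₁) P₁)
          (kl (tilt P₁ P₂ lam) P₂ - kl (tilt P₁ P₂ lam) P₁))) / (n : ℝ))
      Filter.atTop
      ≤ -(min (kl (tilt P₁ P₂ l₂) P₂) (γ + k * kl (tilt P₁ P₂ lam) P₂)) := by
  have hγ : γ ≤ kl (tilt P₁ P₂ l₁) P₂ := hmin ▸ min_le_left _ _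
  obtain ⟨x₀, hx₀⟩ := exists_const_mem_twoPhaseA1 h1pos h2pos l₂ k
    (kl (tilt P₁ P₂ l₁) P₂ - kl (tilt P₁ P₂ l₁) P₁)
    (kl (tilt P₁ P₂ lam) P₂ - kl (tilt P₁ P₂ lam) P₁)
  refine limsup_log_div_le_neg_min (pow_pos (h2pos x₀) (k + 1)) (fun n hn => ?_)
    (fun n hn => prodProb_twoPhaseA1_le h1pos h2pos h2sum hl₁.2 hl₂.2 hlam.2 hγ hk hn)
  calc (P₂ x₀ ^ (k + 1)) ^ n = ∏ _i : Fin ((k + 1) * n), P₂ x₀ := by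
        rw [Finset.prod_const, Finset.card_univ, Fintype.card_fin, pow_mul]
    _ ≤ _ := prod_le_prodProb (fun x => (h2pos x).le) (hx₀ n hn)

/-- Type-II error exponent of the two-phase test:
`limsup (1/n) log P₂(A₁^τ) ≤ −min{D(P^(l₂)‖P₂), γ + k·D(P^(λ)‖P₂)}`. -/
theorem twoPhase_typeII_exponent (P₁ P₂ : 𝒳 → ℝ)
    (h1pos : ∀ x, 0 < P₁ x) (h2pos : ∀ x, 0 < P₂ x)
    (h1sum : ∑ x, P₁ x = 1) (h2sum : ∑ x, P₂ x = 1)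
    (hne : P₁ ≠ P₂)
    (ls : ℝ) (hls : ls ∈ Set.Icc (0:ℝ) 1)
    (hchern : kl (tilt P₁ P₂ ls) P₁ = kl (tilt P₁ P₂ ls) P₂)
    (γ : ℝ) (hγ0 : 0 < γ) (hγD : γ ≤ kl (tilt P₁ P₂ ls) P₁)
    (k : ℕ) (hk : 0 < k)
    (l₁ l₂ lam : ℝ)
    (hl₁ : l₁ ∈ Set.Icc (0:ℝ) 1) (hl₂ : l₂ ∈ Set.Icc (0:ℝ) 1)
    (hlam : lam ∈ Set.Icc (0:ℝ) 1) (hord : l₂ ≤ l₁)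
    (hmin : min (kl (tilt P₁ P₂ l₁) P₂) (kl (tilt P₁ P₂ l₂) P₁) = γ) :
    Filter.limsup (fun n : ℕ =>
        Real.log (prodProb P₂ (twoPhaseA1 P₁ P₂ k n
          (kl (tilt P₁ P₂ l₂) P₂ - kl (tilt P₁ P₂ l₂) P₁)
          (kl (tilt P₁ P₂ l₁) P₂ - kl (tilt P₁ P₂ l₁) P₁)
          (kl (tilt P₁ P₂ lam) P₂ - kl (tilt P₁ P₂ lam) P₁))) / (n : ℝ))
      Filter.atTop
      ≤ -(min (kl (tilt P₁ P₂ l₂) P₂) (γ + k * kl (tilt P₁ P₂ lam) P₂)) :=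
  twoPhase_typeII_exponent_general P₁ P₂ h1pos h2pos h2sum γ k hk l₁ l₂ lam hl₁ hl₂ hlam hmin
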